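/- If Y = X (noiseless channel), then for α ∈ (1/2,1)∪(1,∞) the Lapidoth–Pfister mutual information equals the Rényi entropy of order α/(2α−1): I_α^LP(X;X) = H_{α/(2α−1)}(X). -/

import Mathlib

open BigOperators

/-- `p` is a probability distribution on the finite set `X`. -/
def IsDist {X : Type*} [Fintype X] (p : X → ℝ) : Prop :=
  (∀ x, 0 ≤ p x) ∧ ∑ x, p x = 1

/-- The Rényi entropy of order `a` of a distribution `p`. -/
noncomputable def renyi {X : Type*} [Fintype X] (p : X → ℝ) (a : ℝ) : ℝ :=
  (1 / (1 - a)) * Real.log (∑ x, p x ^ a)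

/-!
With `β = α/(2α-1)` and `S = ∑ p^β`, one has `H_β(p) = (2α-1)/(α-1) · log S`, and on the
diagonal `D_α(p ‖ q_X q_Y) = 1/(α-1) · log ∑ p^α (q_X q_Y)^(1-α)`. Three-factor Hölder
(weighted AM-GM summed over `x`) gives `∑ p^α (q_X q_Y)^(1-α) ≤ S^(2α-1)` for `α < 1`,
writing `p^α = (p^β)^(2α-1)`, and the reverse inequality for `α > 1`, writing
`p^β = (p^α (q_X q_Y)^(1-α))^(1/(2α-1)) · q_X^((α-1)/(2α-1)) · q_Y^((α-1)/(2α-1))`.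
Equality holds for `q_X = q_Y = p^β / S`.
-/

open Real Finset

section

variable {X : Type*} [Fintype X]

lemma sum_rpow_mul_rpow_mul_rpow_le {f g h : X → ℝ}
    (hf : ∀ x, 0 ≤ f x) (hg : ∀ x, 0 ≤ g x) (hh : ∀ x, 0 ≤ h x)
    {r s t : ℝ} (hr : 0 ≤ r) (hs : 0 ≤ s) (ht : 0 ≤ t) (hrst : r + s + t = 1)
    (hF : 0 < ∑ x, f x) (hG : ∑ x, g x = 1) (hH : ∑ x, h x = 1) :
    ∑ x, f x ^ r * g x ^ s * h x ^ t ≤ (∑ x, f x) ^ r := by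
  set F := ∑ x, f x with hF_def
  have normalized : ∑ x, (f x / F) ^ r * g x ^ s * h x ^ t ≤ 1 :=
    calc ∑ x, (f x / F) ^ r * g x ^ s * h x ^ t
        ≤ ∑ x, (r * (f x / F) + s * g x + t * h x) :=
          sum_le_sum fun x _ => geom_mean_le_arith_mean3_weighted hr hs ht
            (div_nonneg (hf x) hF.le) (hg x) (hh x) hrst
      _ = 1 := by
          rw [sum_add_distrib, sum_add_distrib, ← mul_sum, ← mul_sum, ← mul_sum, ← sum_div,
            ← hF_def, div_self hF.ne', hG, hH]
          linarith
  calc ∑ x, f x ^ r * g x ^ s * h x ^ t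
      = (∑ x, (f x / F) ^ r * g x ^ s * h x ^ t) * F ^ r := by
        rw [sum_mul]
        refine sum_congr rfl fun x _ => ?_
        rw [div_rpow (hf x) hF.le]
        field_simp
    _ ≤ F ^ r := mul_le_of_le_one_left (rpow_nonneg hF.le r) normalized

lemma sum_sum_diag_rpow [DecidableEq X] {α : ℝ} (hα : α ≠ 0) (p qX qY : X → ℝ) :
    ∑ x, ∑ y, (p x * (if y = x then (1 : ℝ) else 0)) ^ α * (qX x * qY y) ^ (1 - α)
      = ∑ x, p x ^ α * (qX x * qY x) ^ (1 - α) := by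
  refine sum_congr rfl fun x _ => ?_
  rw [sum_eq_single x (fun y _ hy => by rw [if_neg hy, mul_zero, zero_rpow hα, zero_mul])
    (fun hx => absurd (mem_univ x) hx)]
  simp

lemma renyi_div_two_mul_sub_one (p : X → ℝ) {α : ℝ} (hα : 2 * α - 1 ≠ 0) :
    renyi p (α / (2 * α - 1)) = (2 * α - 1) / (α - 1) * log (∑ x, p x ^ (α / (2 * α - 1))) := by
  have h : 1 - α / (2 * α - 1) = (α - 1) / (2 * α - 1) := by
    rw [eq_div_iff hα]; linear_combination -(div_mul_cancel₀ α hα)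
  rw [renyi, h, one_div_div]

noncomputable def escort (p : X → ℝ) (β : ℝ) (x : X) : ℝ :=
  p x ^ β / ∑ y, p y ^ β

section escort

variable {p : X → ℝ} (hp : ∀ x, 0 < p x) [Nonempty X]
include hp

lemma sum_rpow_pos (β : ℝ) : 0 < ∑ x, p x ^ β :=
  sum_pos (fun x _ => rpow_pos_of_pos (hp x) β) univ_nonempty

lemma escort_pos (β : ℝ) (x : X) : 0 < escort p β x :=
  div_pos (rpow_pos_of_pos (hp x) β) (sum_rpow_pos hp β)

lemma isDist_escort (β : ℝ) : IsDist (escort p β) :=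
  ⟨fun x => (escort_pos hp β x).le, by
    unfold escort
    rw [← sum_div, div_self (sum_rpow_pos hp β).ne']⟩

lemma sum_rpow_mul_escort_sq {α : ℝ} (hα : 2 * α - 1 ≠ 0) :
    ∑ x, p x ^ α * (escort p (α / (2 * α - 1)) x * escort p (α / (2 * α - 1)) x) ^ (1 - α)
      = (∑ x, p x ^ (α / (2 * α - 1))) ^ (2 * α - 1) := by
  set β := α / (2 * α - 1)
  have hS := sum_rpow_pos hp β
  have hexp : α + (β + β) * (1 - α) = β := by linear_combination -(div_mul_cancel₀ α hα)
  have term (x : X) :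
      p x ^ α * (escort p β x * escort p β x) ^ (1 - α)
        = p x ^ β * (∑ y, p y ^ β) ^ (2 * (α - 1)) := by
    rw [escort, div_mul_div_comm, ← rpow_add (hp x), ← sq,
      div_rpow (rpow_nonneg (hp x).le _) (sq_nonneg _), ← rpow_mul (hp x).le, ← mul_div_assoc,
      ← rpow_add (hp x), hexp, div_eq_mul_inv, ← rpow_neg (sq_nonneg _), ← rpow_natCast,
      ← rpow_mul hS.le]
    ring_nf
  rw [sum_congr rfl fun x _ => term x, ← sum_mul,
    ← rpow_one_add' hS.le (by contrapose! hα; linarith)]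
  congr 1
  ring

end escort

section lowerBound

variable {p qX qY : X → ℝ} {α : ℝ}

lemma sum_rpow_mul_le_of_lt_one (hp : ∀ x, 0 ≤ p x) (hqX : IsDist qX) (hqY : IsDist qY)
    (hα0 : 1 / 2 < α) (hα1 : α ≤ 1) (hS : 0 < ∑ x, p x ^ (α / (2 * α - 1))) :
    ∑ x, p x ^ α * (qX x * qY x) ^ (1 - α) ≤ (∑ x, p x ^ (α / (2 * α - 1))) ^ (2 * α - 1) := by
  have h2α : 0 < 2 * α - 1 := by linarith
  calc ∑ x, p x ^ α * (qX x * qY x) ^ (1 - α)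
      = ∑ x, (p x ^ (α / (2 * α - 1))) ^ (2 * α - 1) * qX x ^ (1 - α) * qY x ^ (1 - α) := by
        refine sum_congr rfl fun x _ => ?_
        rw [← rpow_mul (hp x), div_mul_cancel₀ _ h2α.ne', mul_rpow (hqX.1 x) (hqY.1 x),
          mul_assoc]
    _ ≤ _ := sum_rpow_mul_rpow_mul_rpow_le (fun x => rpow_nonneg (hp x) _) hqX.1 hqY.1 h2α.le
        (by linarith) (by linarith) (by ring) hS hqX.2 hqY.2

lemma sum_rpow_le_of_one_lt (hp : ∀ x, 0 ≤ p x) (hqX : IsDist qX) (hqY : IsDist qY)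
    (hqXp : ∀ x, 0 < qX x) (hqYp : ∀ x, 0 < qY x) (hα : 1 < α)
    (hA : 0 < ∑ x, p x ^ α * (qX x * qY x) ^ (1 - α)) :
    (∑ x, p x ^ (α / (2 * α - 1))) ^ (2 * α - 1) ≤ ∑ x, p x ^ α * (qX x * qY x) ^ (1 - α) := by
  have h2α : 0 < 2 * α - 1 := by linarith
  set γ := (α - 1) / (2 * α - 1)
  have hq (x : X) : 0 < qX x * qY x := mul_pos (hqXp x) (hqYp x)
  have term (x : X) : p x ^ (α / (2 * α - 1))
      = (p x ^ α * (qX x * qY x) ^ (1 - α)) ^ (1 / (2 * α - 1)) * qX x ^ γ * qY x ^ γ := by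
    rw [mul_rpow (rpow_nonneg (hp x) _) (rpow_nonneg (hq x).le _), ← rpow_mul (hp x),
      ← rpow_mul (hq x).le, mul_one_div, show (1 - α) * (1 / (2 * α - 1)) = -γ by ring,
      rpow_neg (hq x).le, mul_rpow (hqXp x).le (hqYp x).le, mul_assoc, mul_assoc,
      inv_mul_cancel₀ (mul_pos (rpow_pos_of_pos (hqXp x) γ) (rpow_pos_of_pos (hqYp x) γ)).ne',
      mul_one]
  have holder : ∑ x, p x ^ (α / (2 * α - 1))
      ≤ (∑ x, p x ^ α * (qX x * qY x) ^ (1 - α)) ^ (1 / (2 * α - 1)) := by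
    rw [sum_congr rfl fun x _ => term x]
    exact sum_rpow_mul_rpow_mul_rpow_le
      (fun x => mul_nonneg (rpow_nonneg (hp x) _) (rpow_nonneg (hq x).le _)) hqX.1 hqY.1
      (by positivity) (div_nonneg (by linarith) h2α.le) (div_nonneg (by linarith) h2α.le)
      (by rw [← add_div, ← add_div, div_eq_one_iff_eq h2α.ne']; ring) hA hqX.2 hqY.2
  calc (∑ x, p x ^ (α / (2 * α - 1))) ^ (2 * α - 1)
      ≤ ((∑ x, p x ^ α * (qX x * qY x) ^ (1 - α)) ^ (1 / (2 * α - 1))) ^ (2 * α - 1) :=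
        rpow_le_rpow (sum_nonneg fun x _ => rpow_nonneg (hp x) _) holder h2α.le
    _ = ∑ x, p x ^ α * (qX x * qY x) ^ (1 - α) := by
        rw [← rpow_mul hA.le, one_div_mul_cancel h2α.ne', rpow_one]

lemma renyi_div_two_mul_sub_one_le [Nonempty X] (hp : ∀ x, 0 < p x)
    (hqX : IsDist qX) (hqY : IsDist qY) (hqXp : ∀ x, 0 < qX x) (hqYp : ∀ x, 0 < qY x)
    (hα0 : 1 / 2 < α) (hα1 : α ≠ 1) :
    renyi p (α / (2 * α - 1)) ≤ 1 / (α - 1) * log (∑ x, p x ^ α * (qX x * qY x) ^ (1 - α)) := by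
  have h2α : 0 < 2 * α - 1 := by linarith
  have hS := sum_rpow_pos hp (α / (2 * α - 1))
  have hA : 0 < ∑ x, p x ^ α * (qX x * qY x) ^ (1 - α) :=
    sum_pos (fun x _ => mul_pos (rpow_pos_of_pos (hp x) _)
      (rpow_pos_of_pos (mul_pos (hqXp x) (hqYp x)) _)) univ_nonempty
  rw [renyi_div_two_mul_sub_one p h2α.ne', div_eq_mul_one_div, mul_comm (2 * α - 1), mul_assoc,
    ← log_rpow hS]
  rcases hα1.lt_or_gt with hlt | hgt
  · exact mul_le_mul_of_nonpos_left
      (log_le_log hA (sum_rpow_mul_le_of_lt_one (fun x => (hp x).le) hqX hqY hα0 hlt.le hS))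
      (one_div_nonpos.mpr (by linarith))
  · exact mul_le_mul_of_nonneg_left
      (log_le_log (rpow_pos_of_pos hS _)
        (sum_rpow_le_of_one_lt (fun x => (hp x).le) hqX hqY hqXp hqYp hgt hA))
      (one_div_nonneg.mpr (by linarith))

end lowerBound

end

/-- For the noiseless channel (`Y = X`, joint distribution supported on the diagonal)
and `α ∈ (1/2,1)∪(1,∞)`, the Lapidoth–Pfister MI, i.e. the minimum over product
distributions `q_X q_Y` of `D_α(p_{X,Y} ‖ q_X q_Y)`, equals `H_{α/(2α-1)}(X)`. -/
theorem lapidothPfisterMI_noiseless {X : Type*} [Fintype X] [DecidableEq X]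
    (α : ℝ) (hα0 : 1 / 2 < α) (hα1 : α ≠ 1)
    (p : X → ℝ) (hp : IsDist p) (hps : ∀ x, 0 < p x) :
    IsLeast {v : ℝ | ∃ qX qY : X → ℝ, IsDist qX ∧ IsDist qY ∧
        (∀ x, 0 < qX x) ∧ (∀ y, 0 < qY y) ∧
        v = (1 / (α - 1)) * Real.log (∑ x, ∑ y,
              (p x * (if y = x then (1 : ℝ) else 0)) ^ α * (qX x * qY y) ^ (1 - α))}
      (renyi p (α / (2 * α - 1))) := by
  have hα0' : α ≠ 0 := by positivity
  have h2α : 2 * α - 1 ≠ 0 := by linarith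
  have : Nonempty X := univ_nonempty_iff.mp (nonempty_of_sum_ne_zero (hp.2 ▸ one_ne_zero))
  constructor
  · set β := α / (2 * α - 1)
    refine ⟨escort p β, escort p β, isDist_escort hps β, isDist_escort hps β, escort_pos hps β,
      escort_pos hps β, ?_⟩
    rw [sum_sum_diag_rpow hα0', sum_rpow_mul_escort_sq hps h2α,
      log_rpow (sum_rpow_pos hps β), renyi_div_two_mul_sub_one p h2α]
    ring
  · rintro v ⟨qX, qY, hqX, hqY, hqXp, hqYp, rfl⟩
    rw [sum_sum_diag_rpow hα0']
    exact renyi_div_two_mul_sub_one_le hps hqX hqY hqXp hqYp hα0 hα1
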